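/- The 3-uniform hypergraph based on the complement of the path P_5 on five vertices is minimal non-metric: it is not metric, but every proper induced subhypergraph of it is metric. -/

import Mathlib

universe u

/-- A function `d` is a metric (distance function) on `α`. -/
structure IsMetric {α : Type*} (d : α → α → ℝ) : Prop where
  eq_iff : ∀ x y, d x y = 0 ↔ x = y
  symm : ∀ x y, d x y = d y x
  triangle : ∀ x y z, d x z ≤ d x y + d y z

/-- `[u v w]`: the points are pairwise distinct and `v` lies between `u` and `w`. -/
def MBtw {α : Type*} (d : α → α → ℝ) (u v w : α) : Prop :=
  u ≠ v ∧ u ≠ w ∧ v ≠ w ∧ d u v + d v w = d u w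

/-- The hyperedge set `E_M` associated with a metric space: all triples
`{x,y,z}` such that one of the three points is between the other two. -/
def metricEdges {α : Type*} (d : α → α → ℝ) : Set (Set α) :=
  {s | ∃ u v w : α, s = {u, v, w} ∧ MBtw d u v w}

/-- A 3-uniform hypergraph (given by its hyperedge set on vertex type `V`)
is metric if there is a metric space on ground set `V` with `E = E_M`. -/
def IsMetricHypergraph {V : Type*} (E : Set (Set V)) : Prop :=
  ∃ d : V → V → ℝ, IsMetric d ∧ E = metricEdges d

/-- The hypergraph based on a graph `G`: the vertex set is `V ∪ {x}` (here
`Option V`, with `none` playing the role of the extra point `x`); the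
hyperedges are all three-point subsets of `V` together with all sets
`{x,u,v}` with `{u,v}` an edge of `G`. -/
def basedOn {V : Type*} (G : SimpleGraph V) : Set (Set (Option V)) :=
  {s | (∃ u v w : V, u ≠ v ∧ u ≠ w ∧ v ≠ w ∧ s = {some u, some v, some w}) ∨
       (∃ u v : V, G.Adj u v ∧ s = {none, some u, some v})}

/-- The hyperedge set of the subhypergraph induced on `U`. -/
def inducedEdges {V : Type*} (E : Set (Set V)) (U : Set V) : Set (Set U) :=
  {s | Subtype.val '' s ∈ E}

/-- The line `L_M(xy)` determined by two points of a metric space. -/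
def lineOf {α : Type*} (d : α → α → ℝ) (x y : α) : Set α :=
  {x, y} ∪ {z | ({x, y, z} : Set α) ∈ metricEdges d}

/-- `e` is a two-point set forming an edge of `G`. -/
def IsEdgePair {V : Type*} (G : SimpleGraph V) (e : Set V) : Prop :=
  ∃ u v : V, G.Adj u v ∧ e = {u, v}

/-- The equivalence relation `≡_G`: two pairs are equivalent iff both are
edges of `G` or both are non-edges of `G`. -/
def graphEquiv {V : Type*} (G : SimpleGraph V) (e f : Set V) : Prop :=
  (IsEdgePair G e ∧ IsEdgePair G f) ∨ (¬ IsEdgePair G e ∧ ¬ IsEdgePair G f)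

/-- A relation `r` on two-point subsets of `V` is an obstacle if no metric
space on a superset `W` of `V` has `L_M(ab) = L_M(cd) ↔ {a,b} r {c,d}`
for all two-point subsets `{a,b}`, `{c,d}` of `V`. -/
def IsObstacle {V : Type u} (r : Set V → Set V → Prop) : Prop :=
  ¬ ∃ (W : Type u) (f : V ↪ W) (d : W → W → ℝ), IsMetric d ∧
      ∀ a b c e : V, a ≠ b → c ≠ e →
        (lineOf d (f a) (f b) = lineOf d (f c) (f e) ↔ r {a, b} {c, e})

/-- The restriction of a relation on two-point subsets of `V` to the
two-point subsets of `U ⊆ V`. -/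
def restrictRel {V : Type*} (r : Set V → Set V → Prop) (U : Set V) :
    Set U → Set U → Prop :=
  fun e f => r (Subtype.val '' e) (Subtype.val '' f)

/-!
All triples of vertices of the path are collinear, so by Menger's theorem (a finite metric space
with at least five points all of whose triples are collinear embeds isometrically in the line)
they sit on the real line at positions `p i`. The extra point `x` gives each vertex `i` the
interval `[p i - d x i, p i + d x i]`. The triangle inequality makes these intervals pairwise
intersecting and ordered as a chain (both endpoints increase together), and `{x, i, j}` is
collinear exactly when the intervals of `i` and `j` have the same left end, the same right end,
or abut. The complement of `P_5` contains the induced 4-cycle `0, 3, 1, 4`, and no chain of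
intervals is linked along a 4-cycle while unlinked along both diagonals: a pair of abutting
intervals forces the linking pattern around the square until a diagonal becomes linked, and
without abutting pairs the square alternates between equal left and equal right ends, which puts
the four intervals at the corners of a rectangle, never a chain. The proper induced
subhypergraphs are realised by explicit integer-valued metrics.
-/

open Function

def MetricCollinear {α R : Type*} [Add R] (d : α → α → R) (u v w : α) : Prop :=
  d u w = d u v + d v w ∨ d v w = d v u + d u w ∨ d u v = d u w + d w v

instance {α R : Type*} [Add R] [DecidableEq R] (d : α → α → R) (u v w : α) :
    Decidable (MetricCollinear d u v w) :=
  inferInstanceAs (Decidable (_ ∨ _ ∨ _))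

def AllTriplesCollinear {α : Type*} (d : α → α → ℝ) : Prop :=
  ∀ ⦃u v w⦄, u ≠ v → u ≠ w → v ≠ w → MetricCollinear d u v w

lemma metricCollinear_natCast {α : Type*} (d : α → α → ℕ) (u v w : α) :
    MetricCollinear (fun x y => (d x y : ℝ)) u v w ↔ MetricCollinear d u v w := by
  simp only [MetricCollinear]
  norm_cast

lemma isMetric_natCast {α : Type*} {d : α → α → ℕ}
    (h : ∀ u v w, (d u v = 0 ↔ u = v) ∧ d u v = d v u ∧ d u w ≤ d u v + d v w) :
    IsMetric fun x y => (d x y : ℝ) where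
  eq_iff u v := by exact_mod_cast (h u v u).1
  symm u v := by exact_mod_cast (h u v u).2.1
  triangle u v w := by exact_mod_cast (h u v w).2.2

namespace IsMetric

variable {α : Type*} {d : α → α → ℝ}

lemma self_eq_zero (hd : IsMetric d) (x : α) : d x x = 0 := (hd.eq_iff x x).2 rfl

lemma nonneg (hd : IsMetric d) (x y : α) : 0 ≤ d x y := by
  linarith [hd.triangle x y x, hd.self_eq_zero x, hd.symm x y]

lemma pos (hd : IsMetric d) {x y : α} (h : x ≠ y) : 0 < d x y :=
  (hd.nonneg x y).lt_of_ne fun h0 => h ((hd.eq_iff x y).1 h0.symm)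

lemma comp (hd : IsMetric d) {β : Type*} {f : β → α} (hf : Injective f) :
    IsMetric fun x y => d (f x) (f y) where
  eq_iff _ _ := (hd.eq_iff _ _).trans hf.eq_iff
  symm _ _ := hd.symm _ _
  triangle _ _ _ := hd.triangle _ _ _

lemma mem_metricEdges_iff (hd : IsMetric d) {u v w : α} (huv : u ≠ v) (huw : u ≠ w)
    (hvw : v ≠ w) : {u, v, w} ∈ metricEdges d ↔ MetricCollinear d u v w := by
  constructor
  · rintro ⟨a, b, c, hs, hab, hac, hbc, he⟩
    have mem (y : α) (hy : y ∈ ({a, b, c} : Set α)) : y = u ∨ y = v ∨ y = w := by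
      rw [← hs] at hy
      simpa using hy
    have := hd.symm u v; have := hd.symm u w; have := hd.symm v w
    unfold MetricCollinear
    rcases mem a (by simp) with rfl | rfl | rfl <;> rcases mem b (by simp) with rfl | rfl | rfl <;>
      rcases mem c (by simp) with rfl | rfl | rfl <;>
      first
      | exact (hab rfl).elim | exact (hac rfl).elim | exact (hbc rfl).elim
      | (left; linarith) | (right; left; linarith) | (right; right; linarith)
  · rintro (h | h | h)
    · exact ⟨u, v, w, rfl, huv, huw, hvw, h.symm⟩
    · exact ⟨v, u, w, Set.insert_comm u v _, huv.symm, hvw, huw, h.symm⟩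
    · exact ⟨u, w, v, by rw [Set.pair_comm], huw, huv, hvw.symm, h.symm⟩

lemma eq_abs_sub_or_eq_add (hd : IsMetric d) (hcol : AllTriplesCollinear d) (s u v : α) :
    d u v = |d s u - d s v| ∨ d u v = d s u + d s v := by
  by_cases huv : u = v
  · simp [huv, hd.self_eq_zero]
  by_cases hsu : s = u
  · simp [← hsu, hd.self_eq_zero, abs_of_nonneg (hd.nonneg s v)]
  by_cases hsv : s = v
  · simp [← hsv, hd.self_eq_zero, abs_of_nonneg (hd.nonneg s u), hd.symm u s]
  have := hd.nonneg u v
  rcases hcol hsu hsv huv with h | h | h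
  · left; rw [abs_sub_comm, abs_of_nonneg (by linarith)]; linarith
  · right; linarith [hd.symm u s]
  · left; rw [abs_of_nonneg (by linarith [hd.symm v u])]; linarith [hd.symm v u]

variable {s t : α}

lemma add_eq_of_forall_le (hd : IsMetric d) (hcol : AllTriplesCollinear d)
    (hmax : ∀ u v, d u v ≤ d s t) (w : α) : d s w + d w t = d s t := by
  by_cases hws : w = s
  · simp [hws, hd.self_eq_zero]
  by_cases hwt : w = t
  · simp [hwt, hd.self_eq_zero]
  by_cases hst : s = t
  · subst hst
    exact absurd (hd.self_eq_zero s ▸ hmax s w) (hd.pos (Ne.symm hws)).not_ge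
  rcases hcol (Ne.symm hws) hst hwt with h | h | h
  · exact h.symm
  · linarith [hmax w t, hd.symm w s, hd.pos hws]
  · linarith [hmax s w, hd.symm t w, hd.pos hwt]

lemma eq_abs_sub_or_antipodal (hd : IsMetric d) (hcol : AllTriplesCollinear d)
    (hmax : ∀ u v, d u v ≤ d s t) (u v : α) :
    d u v = |d s u - d s v| ∨ d u v = d s t ∧ d s u + d s v = d s t := by
  have ht (y : α) : d t y = d s t - d s y := by
    linarith [hd.add_eq_of_forall_le hcol hmax y, hd.symm y t]
  rcases hd.eq_abs_sub_or_eq_add hcol s u v with h | hs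
  · exact Or.inl h
  rcases hd.eq_abs_sub_or_eq_add hcol t u v with h | h
  · rw [ht, ht, show d s t - d s u - (d s t - d s v) = -(d s u - d s v) by ring, abs_neg] at h
    exact Or.inl h
  · rw [ht, ht] at h
    exact Or.inr ⟨by linarith, by linarith⟩

/-- If `d u v ≠ |d s u - d s v|`, then `s, u, t, v` is a pseudo-linear quadruple
(`d u v = d s t = d s u + d s v`), and a fifth point `w` cannot form collinear triples with all of
its pairs. -/
lemma eq_abs_sub_of_ne (hd : IsMetric d) (hcol : AllTriplesCollinear d)
    (hmax : ∀ u v, d u v ≤ d s t) {u v w : α} (hws : w ≠ s) (hwt : w ≠ t) (hwu : w ≠ u)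
    (hwv : w ≠ v) : d u v = |d s u - d s v| := by
  by_contra hne
  obtain ⟨huv, hsum⟩ := (hd.eq_abs_sub_or_antipodal hcol hmax u v).resolve_left hne
  have hu : 0 < d s u := (hd.nonneg s u).lt_of_ne fun h0 => hne <| by
    rw [← h0, zero_sub, abs_neg, abs_of_nonneg (hd.nonneg s v)]; linarith
  have hv : 0 < d s v := (hd.nonneg s v).lt_of_ne fun h0 => hne <| by
    rw [← h0, sub_zero, abs_of_nonneg (hd.nonneg s u)]; linarith
  have huv' : u ≠ v := fun h => by subst h; linarith [hd.self_eq_zero u]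
  have hw := hd.add_eq_of_forall_le hcol hmax w
  rcases hd.eq_abs_sub_or_antipodal hcol hmax u w with huw | ⟨huw, huw'⟩ <;>
    rcases hd.eq_abs_sub_or_antipodal hcol hmax v w with hvw | ⟨hvw, hvw'⟩ <;>
    rcases hcol huv' (Ne.symm hwu) (Ne.symm hwv) with h | h | h <;>
    rcases abs_cases (d s u - d s w) with ⟨a₁, b₁⟩ | ⟨a₁, b₁⟩ <;>
    rcases abs_cases (d s v - d s w) with ⟨a₂, b₂⟩ | ⟨a₂, b₂⟩ <;>
    linarith [hd.pos hws, hd.pos hwt, hd.pos hwu, hd.pos hwv, hd.symm w s, hd.symm u w,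
      hd.symm v w, hd.symm u v]

theorem exists_eq_abs_sub [Finite α] (hd : IsMetric d) (hα : 4 < Nat.card α)
    (hcol : AllTriplesCollinear d) : ∃ p : α → ℝ, ∀ u v, d u v = |p u - p v| := by
  classical
  have := Fintype.ofFinite α
  have : Nonempty α := Fintype.card_pos_iff.1 (by rw [← Nat.card_eq_fintype_card]; omega)
  obtain ⟨⟨s, t⟩, hmax⟩ := Finite.exists_max fun q : α × α => d q.1 q.2
  refine ⟨d s, fun u v => ?_⟩
  obtain ⟨w, -, hw⟩ := Finset.exists_mem_notMem_of_card_lt_card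
    (s := {s, t, u, v}) (t := Finset.univ) <| by
      rw [Finset.card_univ, ← Nat.card_eq_fintype_card]
      exact Finset.card_le_four.trans_lt hα
  simp only [Finset.mem_insert, Finset.mem_singleton, not_or] at hw
  exact hd.eq_abs_sub_of_ne hcol (fun u v => hmax (u, v)) hw.1 hw.2.1 hw.2.2.1 hw.2.2.2

end IsMetric

section Intervals

variable {ι : Type*} {l r : ι → ℝ}

def IntervalsLinked (l r : ι → ℝ) (i j : ι) : Prop :=
  l i = l j ∨ r i = r j ∨ r i = l j ∨ r j = l i

lemma IntervalsLinked.symm {i j : ι} (h : IntervalsLinked l r i j) :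
    IntervalsLinked l r j i := by
  unfold IntervalsLinked at *
  tauto

def IsLinkedSquare (l r : ι → ℝ) (a b c e : ι) : Prop :=
  IntervalsLinked l r a b ∧ IntervalsLinked l r b c ∧ IntervalsLinked l r c e ∧
    IntervalsLinked l r e a ∧ ¬IntervalsLinked l r a c ∧ ¬IntervalsLinked l r b e

namespace IsLinkedSquare

variable {a b c e : ι}

lemma rotate (h : IsLinkedSquare l r a b c e) : IsLinkedSquare l r b c e a :=
  ⟨h.2.1, h.2.2.1, h.2.2.2.1, h.1, h.2.2.2.2.2, fun h' => h.2.2.2.2.1 h'.symm⟩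

lemma reflect (h : IsLinkedSquare l r a b c e) : IsLinkedSquare l r b a e c :=
  ⟨h.1.symm, h.2.2.2.1.symm, h.2.2.1.symm, h.2.1.symm, h.2.2.2.2.2, h.2.2.2.2.1⟩

/-- If the intervals of `a` and `b` abut, the edge `b c` is forced to have equal right ends and
`e a` equal left ends, and then every linking of `c e` links a diagonal. -/
lemma right_ne_left (hover : ∀ i j, l i ≤ r j) (h : IsLinkedSquare l r a b c e) :
    r a ≠ l b := by
  intro htouch
  obtain ⟨-, hbc, hce, hea, hac, hbe⟩ := h
  simp only [IntervalsLinked, not_or] at hbc hce hea hac hbe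
  obtain ⟨hac₁, hac₂, hac₃, -⟩ := hac
  obtain ⟨hbe₁, hbe₂, hbe₃, hbe₄⟩ := hbe
  have hbc : r b = r c := by
    rcases hbc with h | h | h | h
    · exact (hac₃ (htouch.trans h)).elim
    · exact h
    · exact (hac₃ (by linarith [hover c a, hover b b])).elim
    · exact (hac₂ (htouch.trans h.symm)).elim
  have hea : l e = l a := by
    rcases hea with h | h | h | h
    · exact h
    · exact (hbe₄ (h.trans htouch)).elim
    · exact (hbe₄ (by linarith [hover b e, hover a a])).elim
    · exact (hbe₁ (htouch.symm.trans h)).elim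
  rcases hce with h | h | h | h
  · exact hac₁ (hea.symm.trans h.symm)
  · exact hbe₂ (hbc.trans h)
  · exact hbe₃ (hbc.trans h)
  · exact hac₃ (by linarith [hover c a, hover b e])

lemma left_eq_or_right_eq (hover : ∀ i j, l i ≤ r j) (h : IsLinkedSquare l r a b c e) :
    l a = l b ∨ r a = r b := by
  rcases h.1 with h' | h' | h' | h'
  · exact Or.inl h'
  · exact Or.inr h'
  · exact (h.right_ne_left hover h').elim
  · exact (h.reflect.right_ne_left hover h').elim

lemma left_ne (hover : ∀ i j, l i ≤ r j)
    (hchain : ∀ i j, (l i ≤ l j ∧ r i ≤ r j) ∨ (l j ≤ l i ∧ r j ≤ r i))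
    (h : IsLinkedSquare l r a b c e) : l a ≠ l b := by
  intro hab
  have hac : ¬IntervalsLinked l r a c := h.2.2.2.2.1
  have hbe : ¬IntervalsLinked l r b e := h.2.2.2.2.2
  simp only [IntervalsLinked, not_or] at hac hbe
  have hbc : r b = r c := (h.rotate.left_eq_or_right_eq hover).resolve_left
    fun hbc => hac.1 (hab.trans hbc)
  have hce : l c = l e := (h.rotate.rotate.left_eq_or_right_eq hover).resolve_right
    fun hce => hbe.2.1 (hbc.trans hce)
  have hea : r e = r a := (h.rotate.rotate.rotate.left_eq_or_right_eq hover).resolve_left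
    fun hea => hac.1 (hce.trans hea).symm
  rcases hchain a c with ⟨h₁, h₂⟩ | ⟨h₁, h₂⟩ <;> rcases hchain b e with ⟨h₃, h₄⟩ | ⟨h₃, h₄⟩
  · exact hac.2.1 (by linarith)
  · exact hac.1 (by linarith)
  · exact hac.1 (by linarith)
  · exact hac.2.1 (by linarith)

end IsLinkedSquare

theorem not_isLinkedSquare (hover : ∀ i j, l i ≤ r j)
    (hchain : ∀ i j, (l i ≤ l j ∧ r i ≤ r j) ∨ (l j ≤ l i ∧ r j ≤ r i)) {a b c e : ι} :
    ¬IsLinkedSquare l r a b c e := by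
  intro h
  have hab := (h.left_eq_or_right_eq hover).resolve_left (h.left_ne hover hchain)
  have hbc := (h.rotate.left_eq_or_right_eq hover).resolve_left (h.rotate.left_ne hover hchain)
  exact h.2.2.2.2.1 (Or.inr (Or.inl (hab.trans hbc)))

end Intervals

namespace IsMetric

variable {β ι : Type*} {d : β → β → ℝ} {x : β} {f : ι → β} {p : ι → ℝ}

lemma intervals_chain (hd : IsMetric d) (hp : ∀ i j, d (f i) (f j) = |p i - p j|) (i j : ι) :
    (p i - d x (f i) ≤ p j - d x (f j) ∧ p i + d x (f i) ≤ p j + d x (f j)) ∨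
      (p j - d x (f j) ≤ p i - d x (f i) ∧ p j + d x (f j) ≤ p i + d x (f i)) := by
  have h₁ := hd.triangle x (f i) (f j)
  have h₂ := hd.triangle x (f j) (f i)
  rw [hp] at h₁ h₂
  rw [abs_sub_comm] at h₂
  rcases abs_cases (p i - p j) with ⟨h, -⟩ | ⟨h, -⟩
  · right; constructor <;> linarith
  · left; constructor <;> linarith

lemma intervals_overlap (hd : IsMetric d) (hp : ∀ i j, d (f i) (f j) = |p i - p j|) (i j : ι) :
    p i - d x (f i) ≤ p j + d x (f j) := by
  have h := hd.triangle (f i) x (f j)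
  rw [hp, hd.symm (f i) x] at h
  linarith [le_abs_self (p i - p j)]

lemma metricCollinear_iff_intervalsLinked (hd : IsMetric d)
    (hp : ∀ i j, d (f i) (f j) = |p i - p j|) (i j : ι) :
    MetricCollinear d x (f i) (f j) ↔
      IntervalsLinked (fun k => p k - d x (f k)) (fun k => p k + d x (f k)) i j := by
  simp only [MetricCollinear, IntervalsLinked]
  rw [hp, hp j i, hd.symm (f i) x, abs_sub_comm (p j) (p i)]
  have := hd.nonneg x (f i); have := hd.nonneg x (f j)
  rcases abs_cases (p i - p j) with ⟨h, hs⟩ | ⟨h, hs⟩ <;> rw [h] <;> constructor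
  all_goals
    first
    | rintro (h | h | h | h)
    | rintro (h | h | h)
  all_goals
    first
    | (left; linarith) | (right; left; linarith) | (right; right; left; linarith)
    | (right; right; right; linarith) | (right; right; linarith)

end IsMetric

lemma metricEdges_comp {α β : Type*} {d : α → α → ℝ} {f : β → α} (hf : Injective f) :
    metricEdges (fun x y => d (f x) (f y)) = {s | f '' s ∈ metricEdges d} := by
  ext s
  constructor
  · rintro ⟨a, b, c, rfl, hab, hac, hbc, h⟩
    exact ⟨f a, f b, f c, by simp [Set.image_insert_eq], hf.ne hab, hf.ne hac, hf.ne hbc, h⟩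
  · rintro ⟨u, v, w, hs, huv, huw, hvw, h⟩
    obtain ⟨a, -, rfl⟩ : u ∈ f '' s := hs ▸ by simp
    obtain ⟨b, -, rfl⟩ : v ∈ f '' s := hs ▸ by simp
    obtain ⟨c, -, rfl⟩ : w ∈ f '' s := hs ▸ by simp
    refine ⟨a, b, c, hf.image_injective ?_, ne_of_apply_ne f huv, ne_of_apply_ne f huw,
      ne_of_apply_ne f hvw, h⟩
    rw [hs, Set.image_insert_eq, Set.image_insert_eq, Set.image_singleton]

lemma isMetricHypergraph_inducedEdges {V : Type*} {E : Set (Set V)} {U : Set V}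
    {d : V → V → ℝ} (hd : IsMetric d) (hE : ∀ s ⊆ U, s ∈ E ↔ s ∈ metricEdges d) :
    IsMetricHypergraph (inducedEdges E U) := by
  refine ⟨_, hd.comp Subtype.val_injective, ?_⟩
  ext s
  rw [metricEdges_comp Subtype.val_injective]
  exact hE _ (Subtype.coe_image_subset U s)

section BasedOn

variable {V : Type*} (G : SimpleGraph V)

lemma exists_eq_triple_of_mem_basedOn {s : Set (Option V)} (hs : s ∈ basedOn G) :
    ∃ u v w, u ≠ v ∧ u ≠ w ∧ v ≠ w ∧ s = {u, v, w} := by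
  rcases hs with ⟨a, b, c, hab, hac, hbc, rfl⟩ | ⟨a, b, hab, rfl⟩
  · exact ⟨some a, some b, some c, by simpa, by simpa, by simpa, rfl⟩
  · exact ⟨none, some a, some b, by simp, by simp, by simpa using hab.ne, rfl⟩

lemma some_mem_basedOn {a b c : V} (hab : a ≠ b) (hac : a ≠ c) (hbc : b ≠ c) :
    {some a, some b, some c} ∈ basedOn G :=
  Or.inl ⟨a, b, c, hab, hac, hbc, rfl⟩

lemma insert_none_mem_basedOn_iff {a b : V} (hab : a ≠ b) :
    {none, some a, some b} ∈ basedOn G ↔ G.Adj a b := by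
  refine ⟨?_, fun h => Or.inr ⟨a, b, h, rfl⟩⟩
  rintro (⟨u, v, w, -, -, -, h⟩ | ⟨u, v, huv, h⟩)
  · have : none ∈ ({some u, some v, some w} : Set (Option V)) := h ▸ by simp
    simp at this
  · have ha : some a ∈ ({none, some u, some v} : Set (Option V)) := h ▸ by simp
    have hb : some b ∈ ({none, some u, some v} : Set (Option V)) := h ▸ by simp
    simp only [Set.mem_insert_iff, Set.mem_singleton_iff, Option.some_inj, reduceCtorEq,
      false_or] at ha hb
    rcases ha with rfl | rfl <;> rcases hb with rfl | rfl
    exacts [absurd rfl hab, huv, huv.symm, absurd rfl hab]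

theorem not_isMetricHypergraph_basedOn [Finite V] (hV : 4 < Nat.card V)
    (hG : (SimpleGraph.cycleGraph 4).IsIndContained G) : ¬IsMetricHypergraph (basedOn G) := by
  rintro ⟨d, hd, hE⟩
  obtain ⟨φ⟩ := hG
  have hcol : AllTriplesCollinear fun u v : V => d (some u) (some v) := by
    intro u v w huv huw hvw
    show MetricCollinear d (some u) (some v) (some w)
    rw [← hd.mem_metricEdges_iff (by simpa) (by simpa) (by simpa), ← hE]
    exact some_mem_basedOn G huv huw hvw
  obtain ⟨p, hp⟩ := (hd.comp (Option.some_injective V)).exists_eq_abs_sub hV hcol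
  have hlinked (i j : V) (hij : i ≠ j) : G.Adj i j ↔
      IntervalsLinked (fun k => p k - d none (some k)) (fun k => p k + d none (some k)) i j := by
    rw [← insert_none_mem_basedOn_iff G hij, hE, hd.mem_metricEdges_iff (by simp) (by simp)
      (by simpa), hd.metricCollinear_iff_intervalsLinked hp]
  have hedge (i j : Fin 4) (hij : (SimpleGraph.cycleGraph 4).Adj i j) :
      IntervalsLinked _ _ (φ i) (φ j) :=
    (hlinked _ _ (φ.injective.ne hij.ne)).1 (φ.map_adj_iff.2 hij)
  have hdiag (i j : Fin 4) (hij : i ≠ j) (hn : ¬(SimpleGraph.cycleGraph 4).Adj i j) :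
      ¬IntervalsLinked _ _ (φ i) (φ j) :=
    (hlinked _ _ (φ.injective.ne hij)).not.1 (φ.map_adj_iff.not.2 hn)
  exact not_isLinkedSquare (hd.intervals_overlap hp) (hd.intervals_chain hp)
    ⟨hedge 0 1 (by decide), hedge 1 2 (by decide), hedge 2 3 (by decide), hedge 3 0 (by decide),
      hdiag 0 2 (by decide) (by decide), hdiag 1 3 (by decide) (by decide)⟩

lemma isMetricHypergraph_inducedEdges_basedOn {U : Set (Option V)}
    {d : Option V → Option V → ℝ} (hd : IsMetric d)
    (hsome : ∀ a b c, a ≠ b → a ≠ c → b ≠ c → some a ∈ U → some b ∈ U → some c ∈ U →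
      MetricCollinear d (some a) (some b) (some c))
    (hnone : ∀ a b, a ≠ b → none ∈ U → some a ∈ U → some b ∈ U →
      (G.Adj a b ↔ MetricCollinear d none (some a) (some b))) :
    IsMetricHypergraph (inducedEdges (basedOn G) U) := by
  refine isMetricHypergraph_inducedEdges hd fun s hs => ?_
  suffices h : ∀ u v w, u ≠ v → u ≠ w → v ≠ w → {u, v, w} ⊆ U →
      ({u, v, w} ∈ basedOn G ↔ {u, v, w} ∈ metricEdges d) by
    constructor
    · intro h'
      obtain ⟨u, v, w, huv, huw, hvw, rfl⟩ := exists_eq_triple_of_mem_basedOn G h'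
      exact (h u v w huv huw hvw hs).1 h'
    · intro h'
      obtain ⟨u, v, w, rfl, huv, huw, hvw, -⟩ := id h'
      exact (h u v w huv huw hvw hs).2 h'
  have hnone' (a b : V) (hab : a ≠ b) (hU : {none, some a, some b} ⊆ U) :
      {none, some a, some b} ∈ basedOn G ↔ {none, some a, some b} ∈ metricEdges d := by
    rw [insert_none_mem_basedOn_iff G hab, hd.mem_metricEdges_iff (by simp) (by simp)
      (by simpa)]
    exact hnone a b hab (hU (by simp)) (hU (by simp)) (hU (by simp))
  intro u v w huv huw hvw hU
  rcases u with _ | a <;> rcases v with _ | b <;> rcases w with _ | c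
  · exact absurd rfl huv
  · exact absurd rfl huv
  · exact absurd rfl huw
  · exact hnone' b c (by simpa using hvw) hU
  · exact absurd rfl hvw
  · rw [Set.insert_comm] at hU ⊢
    exact hnone' a c (by simpa using huw) hU
  · rw [Set.pair_comm (some b), Set.insert_comm (some a)] at hU ⊢
    exact hnone' a b (by simpa using huv) hU
  · refine iff_of_true (some_mem_basedOn G (by simpa using huv) (by simpa using huw)
      (by simpa using hvw)) ((hd.mem_metricEdges_iff huv huw hvw).2 ?_)
    exact hsome a b c (by simpa using huv) (by simpa using huw) (by simpa using hvw)
      (hU (by simp)) (hU (by simp)) (hU (by simp))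

end BasedOn

instance (n : ℕ) : DecidableRel (SimpleGraph.pathGraph n).Adj := fun _ _ =>
  decidable_of_iff' _ SimpleGraph.pathGraph_adj

lemma isIndContained_compl_pathGraph_five :
    (SimpleGraph.cycleGraph 4).IsIndContained (SimpleGraph.pathGraph 5)ᶜ :=
  ⟨{ toFun := ![0, 3, 1, 4]
     inj' := by decide
     map_rel_iff' := fun {a b} => by revert a b; decide }⟩

/-- `deletionMetric k` is a metric on the vertices in which the triples avoiding `k` are collinear
exactly as in the hypergraph based on the complement of `P_5`. Index `0` of the tables stands for
the extra point `none` and index `i + 1` for `some i`. Deleting `some 2` leaves the pseudo-linear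
quadruple `0, 3, 1, 4` (sides `2`, diagonals `4`), which cannot lie on a line. -/
def deletionMetric (k u v : Option (Fin 5)) : ℕ :=
  (![![![0, 10, 9, 8, 7, 6],
      ![10, 0, 1, 2, 3, 4],
      ![9, 1, 0, 1, 2, 3],
      ![8, 2, 1, 0, 1, 2],
      ![7, 3, 2, 1, 0, 1],
      ![6, 4, 3, 2, 1, 0]],
    ![![0, 6, 3, 3, 3, 5],
      ![6, 0, 6, 6, 6, 6],
      ![3, 6, 0, 4, 6, 2],
      ![3, 6, 4, 0, 2, 2],
      ![3, 6, 6, 2, 0, 4],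
      ![5, 6, 2, 2, 4, 0]],
    ![![0, 2, 7, 3, 4, 5],
      ![2, 0, 7, 5, 2, 7],
      ![7, 7, 0, 7, 7, 7],
      ![3, 5, 7, 0, 3, 2],
      ![4, 2, 7, 3, 0, 5],
      ![5, 7, 7, 2, 5, 0]],
    ![![0, 3, 3, 5, 5, 5],
      ![3, 0, 4, 5, 2, 2],
      ![3, 4, 0, 5, 2, 2],
      ![5, 5, 5, 0, 5, 5],
      ![5, 2, 2, 5, 0, 4],
      ![5, 2, 2, 5, 4, 0]],
    ![![0, 3, 4, 4, 7, 2],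
      ![3, 0, 3, 7, 7, 5],
      ![4, 3, 0, 4, 7, 2],
      ![4, 7, 4, 0, 7, 2],
      ![7, 7, 7, 7, 0, 7],
      ![2, 5, 2, 2, 7, 0]],
    ![![0, 3, 3, 3, 5, 6],
      ![3, 0, 4, 6, 2, 6],
      ![3, 4, 0, 2, 2, 6],
      ![3, 6, 2, 0, 4, 6],
      ![5, 2, 2, 4, 0, 6],
      ![6, 6, 6, 6, 6, 0]]] : Fin 6 → Fin 6 → Fin 6 → ℕ)
    ((finSuccEquiv 5).symm k) ((finSuccEquiv 5).symm u) ((finSuccEquiv 5).symm v)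

lemma isMetric_deletionMetric (k : Option (Fin 5)) :
    IsMetric fun u v => (deletionMetric k u v : ℝ) :=
  isMetric_natCast (by revert k; decide)

lemma deletionMetric_collinear : ∀ k a b c, a ≠ b → a ≠ c → b ≠ c → some a ≠ k → some b ≠ k →
    some c ≠ k → MetricCollinear (deletionMetric k) (some a) (some b) (some c) := by
  decide

lemma compl_pathGraph_adj_iff_deletionMetric_collinear : ∀ k a b, a ≠ b → none ≠ k →
    some a ≠ k → some b ≠ k → ((SimpleGraph.pathGraph 5)ᶜ.Adj a b ↔
      MetricCollinear (deletionMetric k) none (some a) (some b)) := by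
  decide

lemma isMetricHypergraph_inducedEdges_basedOn_compl_pathGraph_five {U : Set (Option (Fin 5))}
    (hU : U ≠ Set.univ) :
    IsMetricHypergraph (inducedEdges (basedOn (SimpleGraph.pathGraph 5)ᶜ) U) := by
  obtain ⟨k, hk⟩ := (Set.ne_univ_iff_exists_notMem U).1 hU
  have hne {u} (hu : u ∈ U) : u ≠ k := fun h => hk (h ▸ hu)
  refine isMetricHypergraph_inducedEdges_basedOn _ (isMetric_deletionMetric k)
    (fun a b c hab hac hbc ha hb hc => ?_) (fun a b hab hn ha hb => ?_)
  · rw [metricCollinear_natCast]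
    exact deletionMetric_collinear k a b c hab hac hbc (hne ha) (hne hb) (hne hc)
  · rw [metricCollinear_natCast]
    exact compl_pathGraph_adj_iff_deletionMetric_collinear k a b hab (hne hn) (hne ha) (hne hb)

/-- The hypergraph based on the complement of the path `P_5` is minimal
non-metric. -/
theorem stmt_9 :
    ¬ IsMetricHypergraph (basedOn (SimpleGraph.pathGraph 5)ᶜ) ∧
    ∀ U : Set (Option (Fin 5)), U ≠ Set.univ →
      IsMetricHypergraph (inducedEdges (basedOn (SimpleGraph.pathGraph 5)ᶜ) U) :=
  ⟨not_isMetricHypergraph_basedOn _ (by simp) isIndContained_compl_pathGraph_five,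
    fun _ => isMetricHypergraph_inducedEdges_basedOn_compl_pathGraph_five⟩
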